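/- On Euclidean space ℝⁿ (n ≥ 1) with the standard metric, the volume form α = dx¹ ∧ ⋯ ∧ dxⁿ is exact but not d(bounded): there is no (n−1)-form β with dβ = α and sup_{x∈ℝⁿ} |β(x)| < ∞. -/

import Mathlib

/-!
An `(n-1)`-form `β` is encoded by the vector field `X` with `β = ι_X (dx¹ ∧ ⋯ ∧ dxⁿ)`, so that
`dβ = (div X) dx¹ ∧ ⋯ ∧ dxⁿ` and `|β| = ‖X‖`. The field `x / n` has divergence `1`. If a field
with `div X = 1` were bounded by `K`, the divergence theorem on the cube `[-R, R]ⁿ` would give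
`(2R)ⁿ = ∫ div X = flux ≤ 2n K (2R)ⁿ⁻¹`, that is `R ≤ n K`, which fails for large `R`.
-/

open MeasureTheory Set

section Box

variable {n : ℕ} {K : ℝ}

theorem integral_divergence_Icc_le {a b : Fin (n + 1) → ℝ} (hle : a ≤ b)
    (f : (Fin (n + 1) → ℝ) → Fin (n + 1) → ℝ)
    (f' : (Fin (n + 1) → ℝ) → (Fin (n + 1) → ℝ) →L[ℝ] Fin (n + 1) → ℝ)
    (hf : ∀ x, HasFDerivAt f (f' x) x)
    (hi : IntegrableOn (fun x => ∑ i, f' x (Pi.single i 1) i) (Icc a b))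
    (hK : ∀ y i, |f y i| ≤ K) :
    ∫ x in Icc a b, ∑ i, f' x (Pi.single i 1) i ≤
      ∑ i : Fin (n + 1), 2 * K * volume.real (Icc (a ∘ i.succAbove) (b ∘ i.succAbove)) := by
  rw [integral_divergence_of_hasFDerivAt_off_countable a b hle f f' ∅ countable_empty
    (fun x _ => (hf x).continuousAt.continuousWithinAt) (fun x _ => hf x) hi]
  refine Finset.sum_le_sum fun i _ => ?_
  have hface : ∀ c, ‖∫ x in Icc (a ∘ i.succAbove) (b ∘ i.succAbove), f (i.insertNth c x) i‖ ≤
      K * volume.real (Icc (a ∘ i.succAbove) (b ∘ i.succAbove)) := fun c =>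
    norm_setIntegral_le_of_norm_le_const isCompact_Icc.measure_lt_top fun x _ => hK _ i
  simp only [Real.norm_eq_abs] at hface
  linarith [le_abs_self (∫ x in Icc (a ∘ i.succAbove) (b ∘ i.succAbove), f (i.insertNth (b i) x) i),
    neg_abs_le (∫ x in Icc (a ∘ i.succAbove) (b ∘ i.succAbove), f (i.insertNth (a i) x) i),
    hface (b i), hface (a i)]

theorem volume_real_Icc_const {ι : Type*} [Fintype ι] {R : ℝ} (hR : 0 ≤ R) :
    volume.real (Icc (fun _ : ι => -R) fun _ => R) = (2 * R) ^ Fintype.card ι := by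
  rw [measureReal_def, Real.volume_Icc_pi_toReal fun _ => by linarith, Finset.prod_const,
    Finset.card_univ]
  ring_nf

theorem le_mul_of_divergence_eq_one (f : (Fin (n + 1) → ℝ) → Fin (n + 1) → ℝ)
    (f' : (Fin (n + 1) → ℝ) → (Fin (n + 1) → ℝ) →L[ℝ] Fin (n + 1) → ℝ)
    (hf : ∀ x, HasFDerivAt f (f' x) x) (hdiv : ∀ x, ∑ i, f' x (Pi.single i 1) i = 1)
    (hK : ∀ y i, |f y i| ≤ K) {R : ℝ} (hR : 0 < R) : R ≤ (n + 1) * K := by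
  have hle : (fun _ : Fin (n + 1) => -R) ≤ fun _ => R := fun _ => by linarith
  have hi : IntegrableOn (fun x => ∑ i, f' x (Pi.single i 1) i)
      (Icc (fun _ => -R) fun _ => R) := by
    simp only [hdiv]
    exact integrableOn_const isCompact_Icc.measure_lt_top.ne
  have key := integral_divergence_Icc_le hle f f' hf hi hK
  simp only [hdiv, setIntegral_const, smul_eq_mul, mul_one, Function.comp_def,
    volume_real_Icc_const hR.le, Fintype.card_fin, Finset.sum_const, Finset.card_univ,
    nsmul_eq_mul] at key
  rw [pow_succ, show ((n + 1 : ℕ) : ℝ) * (2 * K * (2 * R) ^ n) = (2 * R) ^ n * (2 * ((n + 1) * K))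
    by push_cast; ring] at key
  linarith [le_of_mul_le_mul_left key (by positivity : (0 : ℝ) < (2 * R) ^ n)]

theorem not_bounded_of_divergence_eq_one (f : (Fin (n + 1) → ℝ) → Fin (n + 1) → ℝ)
    (f' : (Fin (n + 1) → ℝ) → (Fin (n + 1) → ℝ) →L[ℝ] Fin (n + 1) → ℝ)
    (hf : ∀ x, HasFDerivAt f (f' x) x) (hdiv : ∀ x, ∑ i, f' x (Pi.single i 1) i = 1) :
    ¬ ∃ K, ∀ y i, |f y i| ≤ K := by
  rintro ⟨K, hK⟩
  have := le_mul_of_divergence_eq_one f f' hf hdiv hK (R := |(n + 1) * K| + 1) (by positivity)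
  linarith [le_abs_self ((n + 1) * K)]

end Box

namespace EuclideanSpace

variable {n : ℕ}

theorem exists_contDiff_divergence_eq_one (hn : n ≠ 0) :
    ∃ X : EuclideanSpace ℝ (Fin n) → EuclideanSpace ℝ (Fin n),
      ContDiff ℝ 1 X ∧ ∀ x, ∑ i, fderiv ℝ X x (EuclideanSpace.single i 1) i = 1 := by
  let X : EuclideanSpace ℝ (Fin n) →L[ℝ] EuclideanSpace ℝ (Fin n) :=
    (n : ℝ)⁻¹ • ContinuousLinearMap.id ℝ _
  refine ⟨X, X.contDiff, fun x => ?_⟩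
  rw [X.fderiv]
  simp [X, hn]

theorem not_bounded_of_divergence_eq_one
    {X : EuclideanSpace ℝ (Fin n) → EuclideanSpace ℝ (Fin n)} (hX : Differentiable ℝ X)
    (hdiv : ∀ x, ∑ i, fderiv ℝ X x (EuclideanSpace.single i 1) i = 1) :
    ¬ ∃ K, ∀ x, ‖X x‖ ≤ K := by
  rintro ⟨K, hK⟩
  cases n with
  | zero => simpa using hdiv 0
  | succ n =>
    let e := EuclideanSpace.equiv (Fin (n + 1)) ℝ
    refine _root_.not_bounded_of_divergence_eq_one (e ∘ X ∘ e.symm)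
      (fun y => (e : _ →L[ℝ] _).comp ((fderiv ℝ X (e.symm y)).comp (e.symm : _ →L[ℝ] _)))
      (fun y => e.hasFDerivAt.comp y ((hX _).hasFDerivAt.comp y e.symm.hasFDerivAt))
      (fun y => hdiv (e.symm y)) ⟨K, fun y i => (PiLp.norm_apply_le _ i).trans (hK _)⟩

end EuclideanSpace

/-- On Euclidean space `ℝⁿ` (`n ≥ 1`) with the standard
metric, the volume form `α = dx¹ ∧ ⋯ ∧ dxⁿ` is exact but not d(bounded).

Via the standard identification of an `(n-1)`-form `β` on `ℝⁿ` with a vector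
field `X` (by contraction with the volume form), one has `dβ = (div X) α` and
`|β(x)| = ‖X x‖`.  Thus the statement reads: there exists a `C¹` vector field
`X` with `div X ≡ 1` (exactness, e.g. `X = x₁ e₁`), but there is no such `X`
which is in addition bounded (`sup_x ‖X x‖ < ∞`); the proof uses Stokes'
theorem on large balls. -/
theorem volume_form_exact_not_dBounded (n : ℕ) (hn : 1 ≤ n) :
    (∃ X : EuclideanSpace ℝ (Fin n) → EuclideanSpace ℝ (Fin n),
      ContDiff ℝ 1 X ∧
      ∀ x, ∑ i, fderiv ℝ X x (EuclideanSpace.single i 1) i = 1) ∧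
    ¬ ∃ X : EuclideanSpace ℝ (Fin n) → EuclideanSpace ℝ (Fin n),
      ContDiff ℝ 1 X ∧
      (∀ x, ∑ i, fderiv ℝ X x (EuclideanSpace.single i 1) i = 1) ∧
      ∃ K : ℝ, ∀ x, ‖X x‖ ≤ K := by
  refine ⟨EuclideanSpace.exists_contDiff_divergence_eq_one (by omega), ?_⟩
  rintro ⟨X, hX, hdiv, hbdd⟩
  exact EuclideanSpace.not_bounded_of_divergence_eq_one (hX.differentiable one_ne_zero) hdiv hbdd
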